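/- arXiv:math/0206217 — 5 statements merged into one kernel-verified Lean document; each statement's English description precedes it below -/
import Mathlib

section
/- Let h(A)(x) = det(A) / (⟨x,A₁⟩⋯⟨x,Aₙ⟩) for an n-tuple A = (A₁,…,Aₙ) of vectors in ℝⁿ, viewed as a rational function of x ∈ ℝⁿ. Then for any n+1 vectors A₀,…,Aₙ in ℝⁿ, the alternating sum ∑_{i=0}^{n} (-1)^i h(A₀,…,Âᵢ,…,Aₙ)(x) = 0, where Âᵢ means the i-th vector is omitted, at every point x where all the inner products ⟨x,Aⱼ⟩ are nonzero. -/
open Finset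

/-- Cocycle property of h(A)(x) = det A / ∏ ⟨x, A_j⟩. -/
theorem stmt0 (n : ℕ) (A : Fin (n + 1) → Fin n → ℝ) (x : Fin n → ℝ)
    (hx : ∀ j, (∑ k, x k * A j k) ≠ 0) :
    ∑ i : Fin (n + 1), (-1 : ℝ) ^ (i : ℕ) *
      ((Matrix.of fun r c : Fin n => A (i.succAbove r) c).det /
        ∏ j, ∑ k, x k * A (i.succAbove j) k) = 0 := by
  set f : Fin (n + 1) → ℝ := fun j => ∑ k, x k * A j k with hf
  set M : Matrix (Fin (n + 1)) (Fin (n + 1)) ℝ :=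
    Matrix.of fun i j => (Fin.cons (f i) (A i) : Fin (n + 1) → ℝ) j with hM
  -- The determinant of M is zero since column 0 is a linear combination of the others.
  have hMdet : M.det = 0 := by
    rw [← Matrix.det_transpose]
    have hrow : (∑ k : Fin n, x k • M.transpose k.succ) = M.transpose 0 := by
      funext i
      simp [hM, hf, Matrix.transpose_apply, mul_comm]
    have key : M.transpose.updateRow 0 (∑ k, (Fin.cons 0 x : Fin (n + 1) → ℝ) k • M.transpose k) = M.transpose := by
      rw [Fin.sum_univ_succ]
      simp only [Fin.cons_zero, Fin.cons_succ, zero_smul, zero_add]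
      rw [hrow, Matrix.updateRow_eq_self]
    calc M.transpose.det = (M.transpose.updateRow 0 (∑ k, (Fin.cons 0 x : Fin (n + 1) → ℝ) k • M.transpose k)).det := by
          rw [key]
      _ = (Fin.cons 0 x : Fin (n + 1) → ℝ) 0 • M.transpose.det := Matrix.det_updateRow_sum _ _ _
      _ = 0 := by simp
  have hexp := Matrix.det_succ_column_zero M
  have hP : (∏ j, f j) ≠ 0 := Finset.prod_ne_zero_iff.mpr fun j _ => hx j
  have hterm : ∀ i : Fin (n + 1),
      (-1 : ℝ) ^ (i : ℕ) *
        ((Matrix.of fun r c : Fin n => A (i.succAbove r) c).det /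
          ∏ j, ∑ k, x k * A (i.succAbove j) k) =
      ((-1 : ℝ) ^ (i : ℕ) * f i *
        (Matrix.of fun r c : Fin n => A (i.succAbove r) c).det) / ∏ j, f j := by
    intro i
    have hp : (∏ j, f (i.succAbove j)) ≠ 0 :=
      Finset.prod_ne_zero_iff.mpr fun j _ => hx _
    rw [Fin.prod_univ_succAbove f i]
    have : (∏ j, ∑ k, x k * A (i.succAbove j) k) = ∏ j, f (i.succAbove j) := rfl
    rw [this, eq_div_iff (mul_ne_zero (hx i) hp), mul_assoc, div_mul_eq_mul_div,
      mul_div_assoc, mul_div_assoc]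
    rw [div_self hp]
    simp only [hf]
    ring
  rw [Finset.sum_congr rfl fun i _ => hterm i, ← Finset.sum_div, div_eq_zero_iff]
  left
  rw [← hMdet, hexp]
  refine Finset.sum_congr rfl fun i _ => ?_
  have h1 : M i 0 = f i := rfl
  have h2 : M.submatrix i.succAbove Fin.succ =
      Matrix.of fun r c : Fin n => A (i.succAbove r) c := by
    ext r c
    simp [hM, Matrix.submatrix_apply]
  rw [h1, h2]
end

section
/- Let F be a totally real number field of degree n ≥ 3 over ℚ. There is no unit ε ∈ F, ε ∉ ℚ, such that n−1 of the real embeddings of ε are equal to each other. More precisely, if ε ∈ F and there exist real numbers α ≠ β such that one real embedding of ε equals β and all the other n−1 real embeddings equal α, then we reach a contradiction (no such ε ∈ F exists). -/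
/-!
Every complex embedding of `F` is one of the `n` real embeddings, so `v i` is the only embedding
taking the value `β` at `ε`. By the primitive element criterion `ε` then generates `F` over `ℚ`,
so an embedding is determined by its value at `ε`. These values lie in `{α, β}`, hence `F` has at
most two embeddings, against `n ≥ 3`.
-/

open Module IntermediateField

namespace NumberField

variable {F : Type*} [Field F] [NumberField F]

theorem injective_eval_of_eq_of_eval_eq (x : F) (φ₀ : F →+* ℂ)
    (h : ∀ ψ : F →+* ℂ, ψ x = φ₀ x → ψ = φ₀) :
    Function.Injective fun φ : F →+* ℂ ↦ φ x := by
  have hsplits (y : F) : ((minpoly ℚ y).map (algebraMap ℚ ℂ)).Splits := IsAlgClosed.splits _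
  have hgen : ℚ⟮x⟯ = ⊤ :=
    (Field.primitive_element_iff_algHom_eq_of_eval ℚ ℂ hsplits x φ₀.toRatAlgHom).mpr
      fun ψ hψ ↦ AlgHom.coe_ringHom_injective (h ψ hψ.symm).symm
  have hinj := (Field.primitive_element_iff_algHom_eq_of_eval' ℚ ℂ hsplits x).mp hgen
  intro φ ψ hφψ
  exact congrArg AlgHom.toRingHom (hinj (a₁ := φ.toRatAlgHom) (a₂ := ψ.toRatAlgHom) hφψ)

theorem exists_ofRealHom_comp_eq {ι : Type*} [Fintype ι] (v : ι → F →+* ℝ)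
    (hv : Function.Injective v) (hcard : finrank ℚ F = Fintype.card ι) (φ : F →+* ℂ) :
    ∃ j, Complex.ofRealHom.comp (v j) = φ := by
  have hinj : Function.Injective fun j ↦ Complex.ofRealHom.comp (v j) := fun a b h ↦
    hv <| RingHom.ext fun y ↦ Complex.ofReal_injective (RingHom.congr_fun h y)
  exact ((Fintype.bijective_iff_injective_and_card _).mpr
    ⟨hinj, by rw [Embeddings.card, hcard]⟩).2 φ

end NumberField

open NumberField in
/-- In a totally real number field of degree n ≥ 3, no element has one real
embedding equal to β and all other n−1 real embeddings equal to α with α ≠ β. -/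
theorem stmt5 (F : Type*) [Field F] [NumberField F] (n : ℕ) (hn : 3 ≤ n)
    (hdeg : Module.finrank ℚ F = n)
    (v : Fin n → (F →+* ℝ)) (hv : Function.Injective v)
    (ε : F) (α β : ℝ) (hab : α ≠ β)
    (i : Fin n) (hβ : v i ε = β) (hα : ∀ j, j ≠ i → v j ε = α) :
    False := by
  have hall := exists_ofRealHom_comp_eq v hv (by rw [hdeg, Fintype.card_fin])
  have hvalue (j : Fin n) : Complex.ofRealHom.comp (v j) ε = if j = i then β else α := by
    split_ifs with hj
    · simp [hj, hβ]
    · simp [hα j hj]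
  have hfiber (ψ : F →+* ℂ) (hψ : ψ ε = Complex.ofRealHom.comp (v i) ε) :
      ψ = Complex.ofRealHom.comp (v i) := by
    obtain ⟨j, rfl⟩ := hall ψ
    by_cases hj : j = i
    · rw [hj]
    · rw [hvalue, hvalue, if_neg hj, if_pos rfl] at hψ
      exact absurd (Complex.ofReal_injective hψ) hab
  have hcard : Fintype.card (F →+* ℂ) ≤ ({(α : ℂ), (β : ℂ)} : Finset ℂ).card := by
    refine Finset.card_le_card_of_injOn (fun φ ↦ φ ε) (fun φ _ ↦ ?_)
      (injective_eval_of_eq_of_eval_eq ε _ hfiber).injOn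
    obtain ⟨j, rfl⟩ := hall φ
    dsimp only
    rw [hvalue]
    split_ifs <;> simp
  rw [Embeddings.card, hdeg] at hcard
  have := hcard.trans Finset.card_le_two
  omega
end

section
/- Let f(z₁,…,z_m) = ∏ᵢ zᵢ^{−pᵢ} with pᵢ > 0 on the positive orthant, and let M_k be the k×k upper-left submatrix of the Hessian of f. Then det M_k = (1 + ∑_{i≤k} pᵢ) · ∏_{i≤k} pᵢ · f(z)^k · ∏_{i≤k} zᵢ^{−2}. In particular, det M_k > 0 on the positive orthant for each k = 1,…,m. -/
/-!
On the positive orthant `f u = ∏ uₗ ^ aₗ = exp (∑ aₗ log uₗ)`, so `∂ⱼ f = (aⱼ / uⱼ) f` and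
`∂ᵢ∂ⱼ f = f (aᵢ aⱼ / (zᵢ zⱼ) - δᵢⱼ aᵢ / zᵢ²)`. Any principal minor of this Hessian is
`f • D (1 + z wᵀ)` with `D = diag (-aᵢ / zᵢ²)` and `w = -a / z`, a rank-one perturbation of the
identity, so the matrix determinant lemma gives `det = fᵏ (1 - ∑ aᵢ) ∏ (-aᵢ / zᵢ²)`.
For `a = -p` with `p > 0` every factor is positive.
-/

open Finset Filter Topology

section ProdRpow

variable {ι : Type*} [Fintype ι] (a : ι → ℝ)

theorem eventually_nhds_forall_pos {w : ι → ℝ} (hw : ∀ i, 0 < w i) :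
    ∀ᶠ u in 𝓝 w, ∀ i, 0 < u i :=
  eventually_all.2 fun i =>
    continuousAt_const.eventually_lt (continuous_apply i).continuousAt (hw i)

theorem hasFDerivAt_prod_rpow {w : ι → ℝ} (hw : ∀ i, 0 < w i) :
    HasFDerivAt (fun u : ι → ℝ => ∏ l, u l ^ a l)
      ((∏ l, w l ^ a l) • ∑ l, (a l / w l) • ContinuousLinearMap.proj (R := ℝ) l) w := by
  have hexp : ∀ u : ι → ℝ, (∀ i, 0 < u i) →
      ∏ l, u l ^ a l = Real.exp (∑ l, a l * Real.log (u l)) := fun u hu => by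
    rw [Real.exp_sum]
    exact prod_congr rfl fun l _ => by rw [Real.rpow_def_of_pos (hu l), mul_comm]
  have hlog : HasFDerivAt (fun u : ι → ℝ => ∑ l, a l * Real.log (u l))
      (∑ l, (a l / w l) • ContinuousLinearMap.proj (R := ℝ) l) w :=
    HasFDerivAt.fun_sum fun l _ => by
      simpa only [smul_smul, div_eq_mul_inv, Function.comp_def, ContinuousLinearMap.proj_apply]
        using ((Real.hasDerivAt_log (hw l).ne').comp_hasFDerivAt w
          (ContinuousLinearMap.proj (R := ℝ) l).hasFDerivAt).const_mul (a l)
  rw [hexp w hw]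
  exact ((Real.hasDerivAt_exp _).comp_hasFDerivAt w hlog).congr_of_eventuallyEq
    ((eventually_nhds_forall_pos hw).mono fun u hu => hexp u hu)

theorem fderiv_prod_rpow_apply_single [DecidableEq ι] {w : ι → ℝ} (hw : ∀ i, 0 < w i) (j : ι) :
    fderiv ℝ (fun u : ι → ℝ => ∏ l, u l ^ a l) w (Pi.single j 1)
      = a j / w j * ∏ l, w l ^ a l := by
  simp [(hasFDerivAt_prod_rpow a hw).fderiv, Pi.single_apply, mul_comm]

theorem fderiv_fderiv_prod_rpow_apply_single [DecidableEq ι] {z : ι → ℝ} (hz : ∀ i, 0 < z i)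
    (i j : ι) :
    fderiv ℝ (fun w => fderiv ℝ (fun u : ι → ℝ => ∏ l, u l ^ a l) w (Pi.single j 1)) z
        (Pi.single i 1)
      = (∏ l, z l ^ a l) * (a i / z i * (a j / z j) - if i = j then a i / z i ^ 2 else 0) := by
  have hpartial : (fun w => fderiv ℝ (fun u : ι → ℝ => ∏ l, u l ^ a l) w (Pi.single j 1))
      =ᶠ[𝓝 z] fun w => a j / w j * ∏ l, w l ^ a l :=
    (eventually_nhds_forall_pos hz).mono fun w hw => fderiv_prod_rpow_apply_single a hw j
  have hcoef : HasFDerivAt (fun w : ι → ℝ => a j / w j)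
      ((a j * -(z j ^ 2)⁻¹) • ContinuousLinearMap.proj (R := ℝ) j) z := by
    simpa only [div_eq_mul_inv, smul_smul, smul_eq_mul, Function.comp_def,
      ContinuousLinearMap.proj_apply] using
      ((hasDerivAt_inv (hz j).ne').comp_hasFDerivAt z
        (ContinuousLinearMap.proj (R := ℝ) j).hasFDerivAt).const_mul (a j)
  rw [hpartial.fderiv_eq, (hcoef.fun_mul (hasFDerivAt_prod_rpow a hz)).fderiv]
  simp only [add_apply, smul_apply, _root_.sum_apply, ContinuousLinearMap.proj_apply,
    Pi.single_apply, smul_eq_mul, mul_ite, mul_one, mul_zero, sum_ite_eq', mem_univ, ↓reduceIte]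
  rcases eq_or_ne i j with rfl | hij
  · have := (hz i).ne'
    simp only [↓reduceIte]
    field_simp
    ring
  · simp only [hij, hij.symm, ↓reduceIte]
    ring

theorem det_hessian_prod_rpow_submatrix [DecidableEq ι] {n : Type*} [Fintype n] [DecidableEq n]
    {c : n → ι} (hc : Function.Injective c) {z : ι → ℝ} (hz : ∀ i, 0 < z i) :
    (Matrix.of fun i j : n =>
        fderiv ℝ (fun w => fderiv ℝ (fun u : ι → ℝ => ∏ l, u l ^ a l) w (Pi.single (c j) 1)) z
          (Pi.single (c i) 1)).det
      = (∏ l, z l ^ a l) ^ Fintype.card n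
          * ((1 - ∑ i, a (c i)) * ∏ i, (-a (c i) / z (c i) ^ 2)) := by
  have hfactor : (Matrix.of fun i j : n =>
        fderiv ℝ (fun w => fderiv ℝ (fun u : ι → ℝ => ∏ l, u l ^ a l) w (Pi.single (c j) 1)) z
          (Pi.single (c i) 1))
      = (∏ l, z l ^ a l) • (Matrix.diagonal (fun i => -a (c i) / z (c i) ^ 2) *
          (1 + Matrix.replicateCol Unit (fun i => z (c i)) *
            Matrix.replicateRow Unit (fun i => -a (c i) / z (c i)))) := by
    ext i j
    rw [Matrix.of_apply, fderiv_fderiv_prod_rpow_apply_single a hz, Matrix.smul_apply,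
      smul_eq_mul]
    congr 1
    have := (hz (c i)).ne'
    simp only [hc.eq_iff, Matrix.mul_apply, Matrix.diagonal_apply, Matrix.add_apply,
      Matrix.one_apply, univ_unique, PUnit.default_eq_unit, Matrix.replicateCol_apply,
      Matrix.replicateRow_apply, sum_const, card_singleton, one_smul, ite_mul, zero_mul, sum_ite_eq,
      mem_univ, ↓reduceIte]
    split_ifs <;> field_simp <;> ring
  have hdot : (fun i => -a (c i) / z (c i)) ⬝ᵥ (fun i => z (c i)) = -∑ i, a (c i) := by
    simp only [dotProduct, ← sum_neg_distrib]
    exact sum_congr rfl fun i _ => by field_simp [(hz (c i)).ne']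
  rw [hfactor, Matrix.det_smul, Matrix.det_mul, Matrix.det_diagonal,
    Matrix.det_one_add_replicateCol_mul_replicateRow, hdot]
  ring

end ProdRpow

theorem stmt8_general (m : ℕ) (p : Fin m → ℝ) (hp : ∀ i, 0 < p i)
    (z : Fin m → ℝ) (hz : ∀ i, 0 < z i) (k : ℕ) (hk : k ≤ m) :
    (Matrix.of fun i j : Fin k =>
        fderiv ℝ (fun w =>
          fderiv ℝ (fun u : Fin m → ℝ => ∏ l, u l ^ (-(p l))) w
            (Pi.single (Fin.castLE hk j) 1)) z (Pi.single (Fin.castLE hk i) 1)).det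
      = (1 + ∑ i : Fin k, p (Fin.castLE hk i)) * (∏ i : Fin k, p (Fin.castLE hk i))
          * (∏ l, z l ^ (-(p l))) ^ k * (∏ i : Fin k, z (Fin.castLE hk i) ^ (-2 : ℝ))
    ∧ 0 < (Matrix.of fun i j : Fin k =>
        fderiv ℝ (fun w =>
          fderiv ℝ (fun u : Fin m → ℝ => ∏ l, u l ^ (-(p l))) w
            (Pi.single (Fin.castLE hk j) 1)) z (Pi.single (Fin.castLE hk i) 1)).det := by
  have hzpow : ∀ i : Fin k, z (Fin.castLE hk i) ^ (-2 : ℝ) = (z (Fin.castLE hk i) ^ 2)⁻¹ :=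
    fun i => by rw [Real.rpow_neg (hz _).le, Real.rpow_two]
  have hF : 0 < ∏ l, z l ^ (-(p l)) := prod_pos fun l _ => Real.rpow_pos_of_pos (hz l) _
  have hsum : 0 ≤ ∑ i : Fin k, p (Fin.castLE hk i) := sum_nonneg fun i _ => (hp _).le
  have hprod : 0 < ∏ i : Fin k, p (Fin.castLE hk i) / z (Fin.castLE hk i) ^ 2 :=
    prod_pos fun i _ => div_pos (hp _) (pow_pos (hz _) 2)
  rw [det_hessian_prod_rpow_submatrix (fun l => -(p l)) (Fin.castLE_injective hk) hz,
    Fintype.card_fin]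
  simp only [sum_neg_distrib, sub_neg_eq_add, neg_neg]
  refine ⟨?_, by positivity⟩
  simp only [prod_congr rfl fun i _ => hzpow i, div_eq_mul_inv, prod_mul_distrib]
  ring

/-- Determinant of the upper-left k×k minor of the Hessian of f(z) = ∏ zᵢ^{-pᵢ}:
det M_k = (1 + ∑_{i≤k} pᵢ) ∏_{i≤k} pᵢ · f(z)^k · ∏_{i≤k} zᵢ^{-2}, and it is positive. -/
theorem stmt8 (m : ℕ) (hm : 1 ≤ m) (p : Fin m → ℝ) (hp : ∀ i, 0 < p i)
    (z : Fin m → ℝ) (hz : ∀ i, 0 < z i) (k : ℕ) (hk1 : 1 ≤ k) (hk : k ≤ m) :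
    (Matrix.of fun i j : Fin k =>
        fderiv ℝ (fun w =>
          fderiv ℝ (fun u : Fin m → ℝ => ∏ l, u l ^ (-(p l))) w
            (Pi.single (Fin.castLE hk j) 1)) z (Pi.single (Fin.castLE hk i) 1)).det
      = (1 + ∑ i : Fin k, p (Fin.castLE hk i)) * (∏ i : Fin k, p (Fin.castLE hk i))
          * (∏ l, z l ^ (-(p l))) ^ k * (∏ i : Fin k, z (Fin.castLE hk i) ^ (-2 : ℝ))
    ∧ 0 < (Matrix.of fun i j : Fin k =>
        fderiv ℝ (fun w =>
          fderiv ℝ (fun u : Fin m → ℝ => ∏ l, u l ^ (-(p l))) w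
            (Pi.single (Fin.castLE hk j) 1)) z (Pi.single (Fin.castLE hk i) 1)).det :=
  stmt8_general m p hp z hz k hk
end

section
/- Let ε₁,…,εₙ be totally positive units in a totally real field of degree n, satisfying: for real numbers b > a > 1, (i) εᵢ^{(i)} < 1 and εᵢ^{(j)} > 1 for j ≠ i; (iii) εᵢ^{(j)}/εᵢ^{(k)} ∈ (a^{−1}, a) for all j,k ≠ i; (iv) εᵢ^{(j)}/εᵢ^{(i)} > b for all j ≠ i. Then for i ≠ j, the ratio μ = εᵢ/εⱼ has strictly smallest coordinate μ^{(i)} and strictly largest coordinate μ^{(j)}. -/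
open NumberField

/-- For an admissible family of totally positive units (conditions (1),(3),(4) of
Lemma 3 with b > a > 1), the ratio μ = εᵢ/εⱼ has strictly smallest coordinate
μ^{(i)} and strictly largest coordinate μ^{(j)}. -/
theorem stmt14 (F : Type*) [Field F] [NumberField F] (n : ℕ) (hn : 3 ≤ n)
    (hdeg : Module.finrank ℚ F = n)
    (v : Fin n → (F →+* ℝ)) (hv : Function.Injective v)
    (η : Fin n → (𝓞 F)ˣ) (ε : Fin n → Fin n → ℝ)
    (hε : ∀ i k, ε i k = v k (algebraMap (𝓞 F) F ((η i : 𝓞 F))))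
    (hpos : ∀ i k, 0 < ε i k)
    (a b : ℝ) (h1a : 1 < a) (hab : a < b)
    (h1 : ∀ i, ε i i < 1) (h1' : ∀ i j, j ≠ i → 1 < ε i j)
    (h3 : ∀ i j k, j ≠ i → k ≠ i → a⁻¹ < ε i j / ε i k ∧ ε i j / ε i k < a)
    (h4 : ∀ i j, j ≠ i → b < ε i j / ε i i)
    (i j : Fin n) (hij : i ≠ j) :
    ∀ k, k ≠ i → k ≠ j →
      ε i i / ε j i < ε i k / ε j k ∧ ε i k / ε j k < ε i j / ε j j := by
  intro k hki hkj
  have pii := hpos i i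
  have pik := hpos i k
  have pij := hpos i j
  have pji := hpos j i
  have pjk := hpos j k
  have pjj := hpos j j
  have ha0 : (0:ℝ) < a := by linarith
  -- first inequality
  have h4ik : b < ε i k / ε i i := h4 i k hki
  have h3jik : a⁻¹ < ε j i / ε j k := (h3 j i k hij hkj).1
  have e1 : ε i i * b < ε i k := by
    have := (lt_div_iff₀ pii).mp h4ik; linarith
  have e2 : ε j k < a * ε j i := by
    have h := (lt_div_iff₀ pjk).mp h3jik
    nlinarith [mul_inv_cancel₀ (ne_of_gt ha0), mul_pos ha0 pjk]
  -- second inequality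
  have h4jk : b < ε j k / ε j j := h4 j k hkj
  have h3ijk : a⁻¹ < ε i j / ε i k := (h3 i j k hij.symm hki).1
  have e3 : ε j j * b < ε j k := by
    have := (lt_div_iff₀ pjj).mp h4jk; linarith
  have e4 : ε i k < a * ε i j := by
    have h := (lt_div_iff₀ pik).mp h3ijk
    nlinarith [mul_inv_cancel₀ (ne_of_gt ha0), mul_pos ha0 pik]
  constructor
  · rw [div_lt_div_iff₀ pji pjk]
    nlinarith [mul_pos pii pji]
  · rw [div_lt_div_iff₀ pjk pjj]
    nlinarith [mul_pos pij pjj]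
end

section
/- Let C be a fan of rational polyhedral cones in ℝⁿ, let x₀ ∈ ℝⁿ, and define U_{x₀} = {σ ∈ C : dim σ < n, x₀ ∈ span(σ), and x₀ ∉ span(σ') for every proper face σ' < σ}. If σ, σ'' ∈ U_{x₀} and σ'' is a face of some cone in the star of σ with σ not a face of σ'' (i.e., σ'' ∈ Lk(σ)), then x₀ ∈ span(σ ∩ σ''), contradicting minimality; hence Lk(σ) ∩ U_{x₀} = ∅ for every σ ∈ U_{x₀}. -/
open Finset

/-- Standard inner product on ℝⁿ. -/
def dotp {n : ℕ} (x y : Fin n → ℝ) : ℝ := ∑ i, x i * y i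

/-- τ is a face of σ cut out by a supporting hyperplane. -/
def IsFaceOf {n : ℕ} (τ σ : Set (Fin n → ℝ)) : Prop :=
  ∃ u : Fin n → ℝ, (∀ x ∈ σ, 0 ≤ dotp u x) ∧ τ = {x ∈ σ | dotp u x = 0}

/-- σ is a simplicial polyhedral cone. -/
def IsSimplicialCone {n : ℕ} (σ : Set (Fin n → ℝ)) : Prop :=
  ∃ (m : ℕ) (w : Fin m → Fin n → ℝ), LinearIndependent ℝ w ∧
    σ = {x | ∃ lam : Fin m → ℝ, (∀ s, 0 ≤ lam s) ∧ x = ∑ s, lam s • w s}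

lemma dotp_sum_smul {n m : ℕ} (u : Fin n → ℝ) (w : Fin m → Fin n → ℝ) (lam : Fin m → ℝ) :
    dotp u (∑ s, lam s • w s) = ∑ s, lam s * dotp u (w s) := by
  simp only [dotp, Finset.sum_apply, Pi.smul_apply, smul_eq_mul, Finset.mul_sum]
  rw [Finset.sum_comm]
  exact Finset.sum_congr rfl fun s _ => Finset.sum_congr rfl fun i _ => by ring

lemma single_mem_cone {n m : ℕ} (w : Fin m → Fin n → ℝ) (s : Fin m) :
    w s ∈ {x | ∃ lam : Fin m → ℝ, (∀ s, 0 ≤ lam s) ∧ x = ∑ s, lam s • w s} := by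
  classical
  refine ⟨fun s' => if s' = s then 1 else 0, fun s' => by positivity, ?_⟩
  simp [ite_smul]

/-- every element of a face of a simplicial cone has a representation supported on
the generators annihilated by `u`, and conversely those generators lie in the face. -/
lemma face_rep {n m : ℕ} {w : Fin m → Fin n → ℝ} {u : Fin n → ℝ} {x : Fin n → ℝ}
    (hu : ∀ y ∈ {x | ∃ lam : Fin m → ℝ, (∀ s, 0 ≤ lam s) ∧ x = ∑ s, lam s • w s}, 0 ≤ dotp u y)
    (hx : x ∈ {y ∈ {x | ∃ lam : Fin m → ℝ, (∀ s, 0 ≤ lam s) ∧ x = ∑ s, lam s • w s} |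
      dotp u y = 0}) :
    ∃ lam : Fin m → ℝ, (∀ s, 0 ≤ lam s) ∧ (∀ s, dotp u (w s) ≠ 0 → lam s = 0) ∧
      x = ∑ s, lam s • w s := by
  obtain ⟨⟨lam, hlam, hxe⟩, hdot⟩ := hx
  have hterm : ∀ s ∈ Finset.univ, 0 ≤ lam s * dotp u (w s) := fun s _ =>
    mul_nonneg (hlam s) (hu (w s) (single_mem_cone w s))
  have hsum : ∑ s, lam s * dotp u (w s) = 0 := by
    rw [← dotp_sum_smul, ← hxe]; exact hdot
  have hzero := (Finset.sum_eq_zero_iff_of_nonneg hterm).1 hsum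
  refine ⟨lam, hlam, fun s hs => ?_, hxe⟩
  rcases mul_eq_zero.1 (hzero s (Finset.mem_univ s)) with h | h
  · exact h
  · exact absurd h hs

lemma mem_face_of_gen {n m : ℕ} {w : Fin m → Fin n → ℝ} {u : Fin n → ℝ} {s : Fin m}
    (hs : dotp u (w s) = 0) :
    w s ∈ {y ∈ {x | ∃ lam : Fin m → ℝ, (∀ s, 0 ≤ lam s) ∧ x = ∑ s, lam s • w s} |
      dotp u y = 0} :=
  ⟨single_mem_cone w s, hs⟩

/-- elements of the span of `w '' S` have representations supported on `S`. -/
lemma span_rep {n m : ℕ} (w : Fin m → Fin n → ℝ) (S : Set (Fin m)) (x : Fin n → ℝ)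
    (hx : x ∈ Submodule.span ℝ (w '' S)) :
    ∃ c : Fin m → ℝ, (∀ s, s ∉ S → c s = 0) ∧ x = ∑ s, c s • w s := by
  classical
  induction hx using Submodule.span_induction with
  | mem y hy =>
    obtain ⟨s, hsS, rfl⟩ := hy
    refine ⟨fun s' => if s' = s then 1 else 0, fun s' hs' => ?_, by simp [ite_smul]⟩
    by_contra h
    simp only [ite_eq_right_iff, one_ne_zero, imp_false, not_not] at h
    exact hs' (h ▸ hsS)
  | zero => exact ⟨0, fun _ _ => rfl, by simp⟩
  | add y z _ _ hy hz =>
    obtain ⟨c, hc, rfl⟩ := hy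
    obtain ⟨d, hd, rfl⟩ := hz
    exact ⟨c + d, fun s hs => by simp [hc s hs, hd s hs],
      by simp [add_smul, Finset.sum_add_distrib]⟩
  | smul a y _ hy =>
    obtain ⟨c, hc, rfl⟩ := hy
    exact ⟨a • c, fun s hs => by simp [hc s hs], by
      simp [Finset.smul_sum, smul_smul]⟩

/-- For σ in the set U of minimal singular cones for x₀ in a fan C,
no cone of U lies in the link of σ: Lk(σ) ∩ U_{x₀} = ∅. -/
theorem stmt18 (n : ℕ) (C : Set (Set (Fin n → ℝ)))
    (hsimp : ∀ σ ∈ C, IsSimplicialCone σ)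
    (hface : ∀ σ ∈ C, ∀ τ, IsFaceOf τ σ → τ ∈ C)
    (hint : ∀ σ ∈ C, ∀ σ' ∈ C, IsFaceOf (σ ∩ σ') σ ∧ IsFaceOf (σ ∩ σ') σ')
    (x₀ : Fin n → ℝ)
    (U : Set (Set (Fin n → ℝ)))
    (hU : U = {σ | σ ∈ C ∧ Module.finrank ℝ (Submodule.span ℝ σ) < n ∧
        x₀ ∈ Submodule.span ℝ σ ∧
        ∀ σ', IsFaceOf σ' σ → σ' ≠ σ → x₀ ∉ Submodule.span ℝ σ'})
    (σ : Set (Fin n → ℝ)) (hσ : σ ∈ U) :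
    ∀ σ'' ∈ U, ¬ ((∃ t ∈ C, IsFaceOf σ t ∧ IsFaceOf σ'' t) ∧ ¬ IsFaceOf σ σ'') := by
  subst hU
  rintro σ'' hσ'' ⟨⟨t, htC, hfσ, hfσ''⟩, hnotface⟩
  obtain ⟨hσC, -, hxσ, hmin⟩ := hσ
  obtain ⟨hσ''C, -, hxσ'', -⟩ := hσ''
  obtain ⟨h1, h2⟩ := hint σ hσC σ'' hσ''C
  -- rule out σ ∩ σ'' = σ
  by_cases heq : σ ∩ σ'' = σ
  · exact hnotface (heq ▸ h2)
  -- otherwise, by minimality it suffices to show x₀ ∈ span (σ ∩ σ'')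
  refine hmin (σ ∩ σ'') h1 heq ?_
  -- unfold the simplicial structure of t
  obtain ⟨m, w, hw, ht⟩ := hsimp t htC
  subst ht
  obtain ⟨u, hu, hσeq⟩ := hfσ
  obtain ⟨u'', hu'', hσ''eq⟩ := hfσ''
  set S : Set (Fin m) := {s | dotp u (w s) = 0} with hS
  set S'' : Set (Fin m) := {s | dotp u'' (w s) = 0} with hS''
  -- σ ⊆ span (w '' S)
  have hσsub : σ ⊆ ↑(Submodule.span ℝ (w '' S)) := by
    intro x hx
    rw [hσeq] at hx
    obtain ⟨lam, hlam, hsupp, rfl⟩ := face_rep hu hx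
    refine Submodule.sum_mem _ fun s _ => ?_
    by_cases hls : dotp u (w s) = 0
    · exact Submodule.smul_mem _ _ (Submodule.subset_span ⟨s, hls, rfl⟩)
    · rw [hsupp s hls]; simp
  have hσ''sub : σ'' ⊆ ↑(Submodule.span ℝ (w '' S'')) := by
    intro x hx
    rw [hσ''eq] at hx
    obtain ⟨lam, hlam, hsupp, rfl⟩ := face_rep hu'' hx
    refine Submodule.sum_mem _ fun s _ => ?_
    by_cases hls : dotp u'' (w s) = 0
    · exact Submodule.smul_mem _ _ (Submodule.subset_span ⟨s, hls, rfl⟩)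
    · rw [hsupp s hls]; simp
  -- extract representations of x₀
  have hx1 : x₀ ∈ Submodule.span ℝ (w '' S) :=
    Submodule.span_le.2 hσsub hxσ
  have hx2 : x₀ ∈ Submodule.span ℝ (w '' S'') :=
    Submodule.span_le.2 hσ''sub hxσ''
  obtain ⟨c, hc, hxc⟩ := span_rep w S x₀ hx1
  obtain ⟨d, hd, hxd⟩ := span_rep w S'' x₀ hx2
  -- linear independence forces c = d
  have hcd : ∀ s, c s = d s := by
    have h0 : ∑ s, (c - d) s • w s = 0 := by
      simp only [Pi.sub_apply, sub_smul, Finset.sum_sub_distrib, ← hxc, ← hxd, sub_self]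
    have := Fintype.linearIndependent_iff.1 hw (c - d) h0
    intro s
    have := this s
    simpa [sub_eq_zero] using this
  -- generators in S ∩ S'' lie in σ ∩ σ''
  have hgen : ∀ s, s ∈ S → s ∈ S'' → w s ∈ σ ∩ σ'' := by
    intro s hs hs''
    constructor
    · rw [hσeq]; exact mem_face_of_gen hs
    · rw [hσ''eq]; exact mem_face_of_gen hs''
  -- conclude
  rw [hxc]
  refine Submodule.sum_mem _ fun s _ => ?_
  by_cases hcs : c s = 0
  · rw [hcs]; simp
  · have hsS : s ∈ S := by by_contra h; exact hcs (hc s h)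
    have hsS'' : s ∈ S'' := by
      by_contra h
      exact hcs ((hcd s).trans (hd s h))
    exact Submodule.smul_mem _ _ (Submodule.subset_span (hgen s hsS hsS''))
end
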